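/- arXiv:1405.6468 — 2 statements merged into one kernel-verified Lean document; each statement's English description precedes it below -/
import Mathlib

section
/- Let μ be a partition with at most s parts, written as a weakly decreasing sequence of nonnegative integers, let q, w be integers, r = s + q, and ρ = (r−1, r−2, …, 1, 0). Suppose the integer sequence (w^q, μ) + ρ = (r−1+w, …, r−q+w, μ₁+s−1, μ₂+s−2, …, μ_s) has a repeated entry (i.e., is not strictly decreasing after sorting, meaning two entries coincide). Then there is no index t with 0 ≤ t ≤ s satisfying both μ_t ≥ q + t + w and μ_{t+1} ≤ t + w (with conventions μ₀ = +∞ and μ_{s+1} = 0). -/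
/-- Bott's algorithm, vanishing case.  Let `μ` be a partition with at most `s`
parts (encoded as a weakly decreasing `1`-indexed function `μ : ℕ → ℕ`
vanishing beyond index `s`), `q, w` integers, `r = s + q`.  Let `E` be the
sequence `(w^q, μ) + ρ`, i.e. `E i = w + (r − i)` for `1 ≤ i ≤ q` and
`E (q+j) = μ_j + s − j` for `1 ≤ j ≤ s`.  If `E` has two equal entries, then
there is no index `t` with `0 ≤ t ≤ s` satisfying both `μ_t ≥ q + t + w`
(vacuous for `t = 0`, convention `μ₀ = +∞`) and `μ_{t+1} ≤ t + w`. -/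
theorem bott_repeated_entry_no_t (s q : ℕ) (w : ℤ) (μ : ℕ → ℕ)
    (hdec : ∀ i : ℕ, μ (i + 1) ≤ μ i)
    (hlen : ∀ i : ℕ, s < i → μ i = 0)
    (E : ℕ → ℤ)
    (hE₁ : ∀ i : ℕ, 1 ≤ i → i ≤ q → E i = w + ((s : ℤ) + q - i))
    (hE₂ : ∀ j : ℕ, 1 ≤ j → j ≤ s → E (q + j) = (μ j : ℤ) + (s : ℤ) - j)
    (hrep : ∃ i j : ℕ, 1 ≤ i ∧ i < j ∧ j ≤ s + q ∧ E i = E j) :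
    ¬ ∃ t : ℕ, t ≤ s ∧ (t = 0 ∨ (q : ℤ) + t + w ≤ (μ t : ℤ)) ∧
        (μ (t + 1) : ℤ) ≤ (t : ℤ) + w := by
  rintro ⟨t, hts, hμt, hμt1⟩
  obtain ⟨i, j, hi1, hij, hjs, hE⟩ := hrep
  have mono : ∀ a b : ℕ, a ≤ b → μ b ≤ μ a := by
    intro a b h
    induction h with
    | refl => exact le_refl _
    | step _ ih => exact (hdec _).trans ih
  by_cases hjq : j ≤ q
  · rw [hE₁ i hi1 (le_trans hij.le hjq), hE₁ j (by omega) hjq] at hE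
    omega
  · push_neg at hjq
    obtain ⟨j', rfl⟩ : ∃ j', j = q + j' := ⟨j - q, by omega⟩
    have hj'1 : 1 ≤ j' := by omega
    have hj's : j' ≤ s := by omega
    have hEj : E (q + j') = (μ j' : ℤ) + s - j' := hE₂ j' hj'1 hj's
    by_cases hiq : i ≤ q
    · rw [hE₁ i hi1 hiq, hEj] at hE
      by_cases hjt : j' ≤ t
      · have h1 : (μ t : ℤ) ≤ μ j' := by exact_mod_cast mono j' t hjt
        rcases hμt with rfl | h
        · omega
        · omega
      · push_neg at hjt
        have h1 : (μ j' : ℤ) ≤ μ (t + 1) := by exact_mod_cast mono (t + 1) j' (by omega)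
        omega
    · push_neg at hiq
      obtain ⟨i', rfl⟩ : ∃ i', i = q + i' := ⟨i - q, by omega⟩
      rw [hE₂ i' (by omega) (by omega), hEj] at hE
      have h1 : (μ j' : ℤ) ≤ μ i' := by exact_mod_cast mono i' j' (by omega)
      omega
end

section
/- Under the duality ω ↦ ω^∨ = (mβ₂ − α₁ − w₁; mγ₁ − α₂ − w₂) on line weights for the m-arrow Kronecker quiver with dimension vectors γ ⪯ α and β = α−γ, the dual of the canonical bundle computation holds: the canonical bundle of Gr(γ₁,α₁)×Gr(γ₂,α₂) tensored with ⋀^{top} E, where E = ⊕ᵃ Hom(S₁, Q₂) summed over m arrows, equals (⋀^{β₁}Q₁)^{⊗(mβ₂−α₁)} ⊗ (⋀^{γ₂}S₂*)^{⊗(mγ₁−α₂)}. In particular the twisted KLW complexes satisfy F^{ω^∨}_• = (F^ω_•)*[⟨γ,β⟩]. -/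
/-- Duality of twisted KLW complexes for the `m`-arrow Kronecker quiver.  We
work in the Picard group `Pic` of `Gr(γ₁,α₁) × Gr(γ₂,α₂)`, with classes
`detS₁, detQ₁, detS₂, detQ₂` of the determinants of the universal sub- and
quotient bundles, subject to `det Sᵢ ⊗ det Qᵢ ≅ O`.  The canonical bundle is
`ω = (⋀^{γ₁}S₁)^{β₁}(⋀^{β₁}Q₁*)^{γ₁}(⋀^{γ₂}S₂)^{β₂}(⋀^{β₂}Q₂*)^{γ₂}` and
`⋀^{top}E = (⋀^{γ₁}S₁*)^{mβ₂}(⋀^{β₂}Q₂)^{mγ₁}` (up to the trivial factor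
`(⋀^m R₁₂)^{γ₁β₂}`).  Then
`ω ⊗ ⋀^{top}E = (⋀^{β₁}Q₁)^{mβ₂−α₁} ⊗ (⋀^{γ₂}S₂*)^{mγ₁−α₂}`, i.e. the twist
of a line weight `(w₁;w₂)` dualizes to `(mβ₂−α₁−w₁; mγ₁−α₂−w₂)`; and given
the KLW duality (hypothesis `hdual`: twists `v, v'` with
`L v + L v' = ω + ⋀^{top}E` have dual complexes up to the shift `⟨γ,β⟩`), the
complexes satisfy `F^{ω^∨}_• = (F^ω_•)*[⟨γ,β⟩]`. -/
theorem kronecker_weight_duality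
    (m α₁ α₂ γ₁ γ₂ β₁ β₂ : ℤ) (hβ₁ : β₁ = α₁ - γ₁) (hβ₂ : β₂ = α₂ - γ₂)
    (Pic : Type) [AddCommGroup Pic]
    (detS₁ detQ₁ detS₂ detQ₂ : Pic)
    (h₁ : detS₁ + detQ₁ = 0) (h₂ : detS₂ + detQ₂ = 0)
    (ωcan topE : Pic)
    (hω : ωcan = β₁ • detS₁ + γ₁ • (-detQ₁) + β₂ • detS₂ + γ₂ • (-detQ₂))
    (htopE : topE = (m * β₂) • (-detS₁) + (m * γ₁) • detQ₂)
    (L : ℤ × ℤ → Pic)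
    (hL : ∀ w : ℤ × ℤ, L w = w.1 • detQ₁ + w.2 • (-detS₂))
    (Cx : Type) (F : ℤ × ℤ → Cx) (dualShift : Cx → Cx)
    (hdual : ∀ v v' : ℤ × ℤ, L v + L v' = ωcan + topE → F v' = dualShift (F v)) :
    ωcan + topE = L (m * β₂ - α₁, m * γ₁ - α₂) ∧
    ∀ w : ℤ × ℤ, F (m * β₂ - α₁ - w.1, m * γ₁ - α₂ - w.2) = dualShift (F w) := by
  have hS₁ : detS₁ = -detQ₁ := by linear_combination (norm := abel) h₁
  have hQ₂ : detQ₂ = -detS₂ := by linear_combination (norm := abel) h₂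
  have key : ωcan + topE = L (m * β₂ - α₁, m * γ₁ - α₂) := by
    rw [hω, htopE, hL, hS₁, hQ₂]
    simp only [smul_neg, neg_neg, hβ₁, hβ₂]
    module
  refine ⟨key, fun w => ?_⟩
  apply hdual
  rw [hL, hL, key, hL]
  simp only [smul_neg]
  module
end
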